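/- Let n ≥ 1, let 1 ≤ i < j ≤ n be top positions and 1 ≤ k < l ≤ n be bottom positions. Suppose μ and μ' are Brauer diagrams of size n that agree on every edge not incident to any of T_i, T_j, B_k, B_l, and that μ contains the cup {T_i,T_j} and the cap {B_k,B_l}, while μ' contains the arcs {T_i,B_k} and {T_j,B_l}. Then χ(μ) ≡ χ(μ') (mod 2), i.e. (−1)^{χ(μ)} = (−1)^{χ(μ')}. -/

import Mathlib

/-!
Both diagrams consist of a common set `R` of edges avoiding `T_i, T_j, B_k, B_l` plus two
special edges, and the two special edges do not cross each other in either diagram. Counting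
ordered crossing pairs, the crossing number is therefore that of `R` plus the number of
crossings of the two special edges with `R`. So it suffices that every edge of `R` crosses the
cup and the cap together as often, modulo 2, as it crosses the two arcs, which is a case check
on the positions of its endpoints relative to `i, j, k, l`.
-/

open Finset

/-- Vertices of a Brauer diagram of size `n`: `Sum.inl i` is the top point `T i`
and `Sum.inr m` is the bottom point `B m` (positions indexed left to right by `Fin n`). -/
abbrev BVertex (n : ℕ) := Fin n ⊕ Fin n

/-- A Brauer diagram of size `n` is a perfect matching of the `2n` vertices,
encoded as a fixed-point-free involution. -/
def BrauerDiagram (n : ℕ) :=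
  {f : Equiv.Perm (BVertex n) // (∀ x, f (f x) = x) ∧ (∀ x, f x ≠ x)}

instance (n : ℕ) : Fintype (BrauerDiagram n) := Subtype.fintype _

/-- An edge of a Brauer diagram: a cup joins two top points, a cap joins two bottom
points, and an arc joins a top point and a bottom point. In `cup i j` and `cap i j`
we maintain `i < j`, and in `arc i m`, `i` is the top position and `m` the bottom one. -/
inductive BEdge (n : ℕ)
  | cup : Fin n → Fin n → BEdge n
  | cap : Fin n → Fin n → BEdge n
  | arc : Fin n → Fin n → BEdge n
deriving DecidableEq

/-- The canonical edge with endpoints `x` and `y`. -/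
def edgeOf {n : ℕ} : BVertex n → BVertex n → BEdge n
  | .inl i, .inl j => .cup (min i j) (max i j)
  | .inr i, .inr j => .cap (min i j) (max i j)
  | .inl i, .inr m => .arc i m
  | .inr m, .inl i => .arc i m

/-- Whether two edges of a Brauer diagram cross. -/
def crosses {n : ℕ} : BEdge n → BEdge n → Bool
  | .cup i j, .cup k l => decide ((i < k ∧ k < j ∧ j < l) ∨ (k < i ∧ i < l ∧ l < j))
  | .cap i j, .cap k l => decide ((i < k ∧ k < j ∧ j < l) ∨ (k < i ∧ i < l ∧ l < j))
  | .cup _ _, .cap _ _ => false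
  | .cap _ _, .cup _ _ => false
  | .cup i j, .arc k _ => decide (i < k ∧ k < j)
  | .arc k _, .cup i j => decide (i < k ∧ k < j)
  | .cap i j, .arc _ m => decide (i < m ∧ m < j)
  | .arc _ m, .cap i j => decide (i < m ∧ m < j)
  | .arc i m, .arc j m' => decide ((i < j ∧ m' < m) ∨ (j < i ∧ m < m'))

/-- The set of edges of a Brauer diagram. -/
def edges {n : ℕ} (μ : BrauerDiagram n) : Finset (BEdge n) :=
  Finset.univ.image fun x => edgeOf x (μ.1 x)

/-- The crossing number of a Brauer diagram: the number of unordered pairs of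
its edges that cross. -/
def crossingNumber {n : ℕ} (μ : BrauerDiagram n) : ℕ :=
  ((edges μ).offDiag.filter fun p => crosses p.1 p.2 = true).card / 2

namespace BEdge

variable {n : ℕ}

theorem crosses_self (e : BEdge n) : crosses e e = false := by
  cases e <;> simp [crosses]

theorem crosses_comm (e f : BEdge n) : crosses e f = crosses f e := by
  cases e <;> cases f <;> simp only [crosses, decide_eq_decide] <;> tauto

end BEdge

section Counting

variable {n : ℕ}

def crossingsWith (e : BEdge n) (S : Finset (BEdge n)) : ℕ :=
  ∑ f ∈ S, (crosses e f).toNat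

def orderedCrossings (S : Finset (BEdge n)) : ℕ :=
  ∑ e ∈ S, crossingsWith e S

theorem crossingsWith_insert {e a : BEdge n} {S : Finset (BEdge n)} (ha : a ∉ S) :
    crossingsWith e (insert a S) = (crosses e a).toNat + crossingsWith e S :=
  Finset.sum_insert ha

theorem orderedCrossings_insert {a : BEdge n} {S : Finset (BEdge n)} (ha : a ∉ S) :
    orderedCrossings (insert a S) = orderedCrossings S + 2 * crossingsWith a S := by
  have hS : ∑ e ∈ S, crossingsWith e (insert a S) = crossingsWith a S + orderedCrossings S := by
    simp only [crossingsWith_insert ha, Finset.sum_add_distrib, BEdge.crosses_comm _ a]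
    rfl
  rw [orderedCrossings, Finset.sum_insert ha, hS, crossingsWith_insert ha, BEdge.crosses_self]
  simp only [Bool.toNat_false]
  ring

theorem crossingNumber_eq_orderedCrossings_div_two (μ : BrauerDiagram n) :
    crossingNumber μ = orderedCrossings (edges μ) / 2 := by
  have hpairs : (edges μ).offDiag.filter (fun p => crosses p.1 p.2 = true) =
      (edges μ ×ˢ edges μ).filter (fun p => crosses p.1 p.2 = true) := by
    ext ⟨e, f⟩
    simp only [Finset.mem_filter, Finset.mem_offDiag, Finset.mem_product]
    refine ⟨fun ⟨⟨he, hf, _⟩, hc⟩ => ⟨⟨he, hf⟩, hc⟩, fun ⟨⟨he, hf⟩, hc⟩ => ⟨⟨he, hf, ?_⟩, hc⟩⟩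
    rintro rfl
    simp [BEdge.crosses_self] at hc
  rw [crossingNumber, hpairs, Finset.card_filter, Finset.sum_product]
  congr 1
  refine Finset.sum_congr rfl fun e _ => Finset.sum_congr rfl fun f _ => ?_
  cases crosses e f <;> rfl

end Counting

theorem edgeOf_comm {n : ℕ} (x y : BVertex n) : edgeOf x y = edgeOf y x := by
  rcases x with a | a <;> rcases y with b | b <;> simp [edgeOf, min_comm, max_comm]

theorem eq_or_eq_of_edgeOf_eq {n : ℕ} {v w x y : BVertex n} (h : edgeOf v w = edgeOf x y) :
    v = x ∨ v = y := by
  rcases v with a | a <;> rcases w with b | b <;> rcases x with c | c <;> rcases y with d | d <;>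
    simp [edgeOf, Fin.ext_iff] at h ⊢ <;> omega

namespace BrauerDiagram

variable {n : ℕ} (μ : BrauerDiagram n)

theorem apply_apply (x : BVertex n) : μ.1 (μ.1 x) = x := μ.2.1 x

theorem apply_ne (x : BVertex n) : μ.1 x ≠ x := μ.2.2 x

def edgesAvoiding (A : Finset (BVertex n)) : Finset (BEdge n) :=
  Aᶜ.image fun v => edgeOf v (μ.1 v)

theorem edgesAvoiding_congr {μ' : BrauerDiagram n} {A : Finset (BVertex n)}
    (h : ∀ v ∉ A, μ.1 v = μ'.1 v) : μ.edgesAvoiding A = μ'.edgesAvoiding A :=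
  Finset.image_congr fun v hv => by rw [h v (Finset.mem_compl.mp hv)]

theorem edgeOf_notMem_edgesAvoiding {A : Finset (BVertex n)} {x : BVertex n} (hx : x ∈ A)
    (hμx : μ.1 x ∈ A) : edgeOf x (μ.1 x) ∉ μ.edgesAvoiding A := by
  simp only [edgesAvoiding, Finset.mem_image, Finset.mem_compl, not_exists, not_and]
  intro v hv hvx
  rcases eq_or_eq_of_edgeOf_eq hvx with rfl | rfl <;> contradiction

variable {μ} {x y z w : BVertex n}

theorem edges_eq_insert_insert (hxy : μ.1 x = y) (hzw : μ.1 z = w) :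
    edges μ = insert (edgeOf x y) (insert (edgeOf z w) (μ.edgesAvoiding {x, y, z, w})) := by
  have hyx : μ.1 y = x := hxy ▸ μ.apply_apply x
  have hwz : μ.1 w = z := hzw ▸ μ.apply_apply z
  rw [edges, ← Finset.union_compl {x, y, z, w}, Finset.image_union]
  simp [hxy, hzw, hyx, hwz, edgeOf_comm y x, edgeOf_comm w z, edgesAvoiding]

theorem crossingNumber_eq_of_apply_eq (hxy : μ.1 x = y) (hzw : μ.1 z = w) (hxz : x ≠ z)
    (hxw : x ≠ w) :
    crossingNumber μ = orderedCrossings (μ.edgesAvoiding {x, y, z, w}) / 2 +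
      ((crosses (edgeOf x y) (edgeOf z w)).toNat +
        crossingsWith (edgeOf x y) (μ.edgesAvoiding {x, y, z, w}) +
        crossingsWith (edgeOf z w) (μ.edgesAvoiding {x, y, z, w})) := by
  have hne : edgeOf x y ≠ edgeOf z w := fun h => (eq_or_eq_of_edgeOf_eq h).elim hxz hxw
  have hxy_notMem : edgeOf x y ∉ μ.edgesAvoiding {x, y, z, w} := by
    subst hxy; exact μ.edgeOf_notMem_edgesAvoiding (by simp) (by simp)
  have hzw_notMem : edgeOf z w ∉ μ.edgesAvoiding {x, y, z, w} := by
    subst hzw; exact μ.edgeOf_notMem_edgesAvoiding (by simp) (by simp)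
  rw [crossingNumber_eq_orderedCrossings_div_two, edges_eq_insert_insert hxy hzw,
    orderedCrossings_insert (by simp [hne, hxy_notMem]),
    orderedCrossings_insert hzw_notMem, crossingsWith_insert hzw_notMem]
  omega

theorem apply_notMem_of_notMem (hxy : μ.1 x = y) (hzw : μ.1 z = w) {v : BVertex n}
    (hv : v ∉ ({x, y, z, w} : Finset (BVertex n))) :
    μ.1 v ∉ ({x, y, z, w} : Finset (BVertex n)) := by
  have hyx : μ.1 y = x := hxy ▸ μ.apply_apply x
  have hwz : μ.1 w = z := hzw ▸ μ.apply_apply z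
  have hvv := μ.apply_apply v
  simp only [Finset.mem_insert, Finset.mem_singleton] at hv ⊢
  grind

theorem exists_edgeOf_of_mem_edgesAvoiding (hxy : μ.1 x = y) (hzw : μ.1 z = w) {e : BEdge n}
    (he : e ∈ μ.edgesAvoiding {x, y, z, w}) :
    ∃ v, v ∉ ({x, y, z, w} : Finset (BVertex n)) ∧ μ.1 v ∉ ({x, y, z, w} : Finset (BVertex n)) ∧
      v ≠ μ.1 v ∧ e = edgeOf v (μ.1 v) := by
  obtain ⟨v, hv, rfl⟩ := Finset.mem_image.mp he
  have hv := Finset.mem_compl.mp hv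
  exact ⟨v, hv, apply_notMem_of_notMem hxy hzw hv, (μ.apply_ne v).symm, rfl⟩

end BrauerDiagram

theorem crosses_cup_add_cap_modEq_arc_add_arc {n : ℕ} {i j k l : Fin n} (hij : i < j)
    (hkl : k < l) {x y : BVertex n} (hxy : x ≠ y)
    (hx : x ∉ ({.inl i, .inl j, .inr k, .inr l} : Finset (BVertex n)))
    (hy : y ∉ ({.inl i, .inl j, .inr k, .inr l} : Finset (BVertex n))) :
    (crosses (.cup i j) (edgeOf x y)).toNat + (crosses (.cap k l) (edgeOf x y)).toNat ≡
      (crosses (.arc i k) (edgeOf x y)).toNat +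
        (crosses (.arc j l) (edgeOf x y)).toNat [MOD 2] := by
  simp only [Finset.mem_insert, Finset.mem_singleton, not_or] at hx hy
  rcases x with a | a <;> rcases y with b | b <;>
    simp only [edgeOf, crosses, Nat.ModEq, Bool.toNat, Bool.cond_decide, Fin.lt_def, Fin.ext_iff,
      Fin.coe_min, Fin.coe_max, ne_eq, Sum.inl.injEq, Sum.inr.injEq, reduceCtorEq,
      not_false_eq_true, cond_false] at hij hkl hxy hx hy ⊢ <;>
    split_ifs <;> omega

theorem cup_cap_to_arcs_parity_general (n : ℕ) (i j k l : Fin n)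
    (hij : i < j) (hkl : k < l) (μ μ' : BrauerDiagram n)
    (hcup : μ.1 (Sum.inl i) = Sum.inl j)
    (hcap : μ.1 (Sum.inr k) = Sum.inr l)
    (harc1 : μ'.1 (Sum.inl i) = Sum.inr k)
    (harc2 : μ'.1 (Sum.inl j) = Sum.inr l)
    (hagree : ∀ x : BVertex n, x ≠ Sum.inl i → x ≠ Sum.inl j →
      x ≠ Sum.inr k → x ≠ Sum.inr l → μ.1 x = μ'.1 x) :
    (-1 : ℤ) ^ crossingNumber μ = (-1 : ℤ) ^ crossingNumber μ' := by
  have hχ := μ.crossingNumber_eq_of_apply_eq hcup hcap (by simp) (by simp)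
  have hχ' := μ'.crossingNumber_eq_of_apply_eq harc1 harc2 (by simp [hij.ne]) (by simp)
  have hrest : μ'.edgesAvoiding {.inl i, .inr k, .inl j, .inr l} =
      μ.edgesAvoiding {.inl i, .inl j, .inr k, .inr l} := by
    rw [Finset.insert_comm (Sum.inr k)]
    exact (μ.edgesAvoiding_congr (by simpa using hagree)).symm
  have hcupcap : crosses (edgeOf (.inl i) (.inl j)) (edgeOf (.inr k) (.inr l)) = false := rfl
  have harcs : crosses (edgeOf (.inl i) (.inr k)) (edgeOf (.inl j) (.inr l)) = false := by
    simp [edgeOf, crosses, hij.le, hkl.le]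
  have hcupEdge : edgeOf (.inl i) (.inl j) = BEdge.cup i j := by simp [edgeOf, hij.le]
  have hcapEdge : edgeOf (.inr k) (.inr l) = BEdge.cap k l := by simp [edgeOf, hkl.le]
  rw [hcupcap, hcupEdge, hcapEdge] at hχ
  rw [hrest, harcs] at hχ'
  rw [neg_one_pow_eq_pow_mod_two, neg_one_pow_eq_pow_mod_two (crossingNumber μ'), hχ, hχ']
  congr 1
  refine Nat.ModEq.add_left _ ?_
  simp only [Bool.toNat_false, zero_add, crossingsWith, ← Finset.sum_add_distrib]
  refine Nat.ModEq.sum fun e he => ?_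
  obtain ⟨v, hv, hμv, hne, rfl⟩ := BrauerDiagram.exists_edgeOf_of_mem_edgesAvoiding hcup hcap he
  exact crosses_cup_add_cap_modEq_arc_add_arc hij hkl hne hv hμv

/-- Lemma (a): replacing a cup `{T_i,T_j}` and a cap `{B_k,B_l}` by the two arcs
`{T_i,B_k}` and `{T_j,B_l}`, all other edges remaining the same, preserves the
parity of the crossing number. -/
theorem cup_cap_to_arcs_parity (n : ℕ) (hn : 1 ≤ n) (i j k l : Fin n)
    (hij : i < j) (hkl : k < l) (μ μ' : BrauerDiagram n)
    (hcup : μ.1 (Sum.inl i) = Sum.inl j)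
    (hcap : μ.1 (Sum.inr k) = Sum.inr l)
    (harc1 : μ'.1 (Sum.inl i) = Sum.inr k)
    (harc2 : μ'.1 (Sum.inl j) = Sum.inr l)
    (hagree : ∀ x : BVertex n, x ≠ Sum.inl i → x ≠ Sum.inl j →
      x ≠ Sum.inr k → x ≠ Sum.inr l → μ.1 x = μ'.1 x) :
    (-1 : ℤ) ^ crossingNumber μ = (-1 : ℤ) ^ crossingNumber μ' :=
  cup_cap_to_arcs_parity_general n i j k l hij hkl μ μ' hcup hcap harc1 harc2 hagree
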